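/- arXiv:1310.0154 — 2 statements merged into one kernel-verified Lean document; each statement's English description precedes it below -/
import Mathlib

section
/- There exist universal constants c0, c1, c2 > 0 with the following property. In the structured setting (U, V ∈ R^{n×r}, Ū, V̄ ∈ R^{n×r̄} with orthonormal columns, col(U) ⊆ col(Ū), col(V) ⊆ col(V̄), standard incoherence parameters μ0 and μ̄0 respectively), for any fixed matrix Z ∈ R^{n×n} and a Bernoulli(p) sample Ω with p ≥ c0 · μ0 μ̄0 r r̄ log n / n, with probability at least 1 − c1 n^{−c2}, ‖(P_T R_Ω − P_T)Z‖_{∞,2} ≤ (1/2) sqrt(n/(μ0 r)) ‖Z‖_∞ + (1/2) ‖Z‖_{∞,2}. -/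
open MeasureTheory Matrix

noncomputable section

/-- Frobenius norm of a real matrix. -/
def frobNorm {m n : ℕ} (X : Matrix (Fin m) (Fin n) ℝ) : ℝ :=
  Real.sqrt (∑ i, ∑ j, (X i j) ^ 2)

/-- Nuclear norm: sum of singular values (square roots of eigenvalues of XᵀX). -/
def nuclearNorm {m n : ℕ} (X : Matrix (Fin m) (Fin n) ℝ) : ℝ :=
  ∑ i, Real.sqrt ((show (Xᵀ * X).IsHermitian by
    simpa using Matrix.isHermitian_conjTranspose_mul_self X).eigenvalues i)

/-- Spectral norm: operator norm of the associated Euclidean linear map. -/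
def specNorm {m n : ℕ} (X : Matrix (Fin m) (Fin n) ℝ) : ℝ :=
  ‖(Matrix.toEuclideanLin X).toContinuousLinearMap‖

/-- Entrywise ℓ∞ norm. -/
def linf {m n : ℕ} (X : Matrix (Fin m) (Fin n) ℝ) : ℝ := ⨆ i, ⨆ j, |X i j|

/-- ℓ∞,2 norm: maximum of the largest row and column ℓ₂ norms. -/
def linf2 {n : ℕ} (X : Matrix (Fin n) (Fin n) ℝ) : ℝ :=
  max (⨆ i, Real.sqrt (∑ j, (X i j) ^ 2)) (⨆ j, Real.sqrt (∑ i, (X i j) ^ 2))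

/-- Operator norm (w.r.t. the Frobenius norm) of a map on n×n matrices. -/
def opNormMap {n : ℕ} (A : Matrix (Fin n) (Fin n) ℝ → Matrix (Fin n) (Fin n) ℝ) : ℝ :=
  ⨆ Z : {Z : Matrix (Fin n) (Fin n) ℝ // frobNorm Z ≤ 1}, frobNorm (A Z.1)

/-- P_Ω for a Boolean sample ω. -/
def projB {n : ℕ} (ω : Fin n × Fin n → Bool) (Z : Matrix (Fin n) (Fin n) ℝ) :
    Matrix (Fin n) (Fin n) ℝ := fun i j => if ω (i, j) then Z i j else 0

open Classical in
/-- P_Ω for a set Ω of indices. -/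
def projS {n : ℕ} (Ω : Set (Fin n × Fin n)) (Z : Matrix (Fin n) (Fin n) ℝ) :
    Matrix (Fin n) (Fin n) ℝ := fun i j => if (i, j) ∈ Ω then Z i j else 0

/-- The tangent-space projection P_T determined by U and V. -/
def projT {n r : ℕ} (U V : Matrix (Fin n) (Fin r) ℝ) (Z : Matrix (Fin n) (Fin n) ℝ) :
    Matrix (Fin n) (Fin n) ℝ :=
  U * Uᵀ * Z + Z * V * Vᵀ - U * Uᵀ * Z * V * Vᵀ

/-- Bernoulli(p) measure on Bool. -/
def bern (p : ℝ) : Measure Bool :=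
  ENNReal.ofReal p • Measure.dirac true + ENNReal.ofReal (1 - p) • Measure.dirac false

/-- Product Bernoulli(p) measure on index samples: each (i,j) observed independently
with probability p. -/
def sampleMeasure (n : ℕ) (p : ℝ) : Measure (Fin n × Fin n → Bool) :=
  Measure.pi fun _ => bern p

/-- ℓ₂ norm of the i-th row of U, i.e. ‖Uᵀ e_i‖₂. -/
def rowNorm {n r : ℕ} (U : Matrix (Fin n) (Fin r) ℝ) (i : Fin n) : ℝ :=
  Real.sqrt (∑ k, (U i k) ^ 2)

/-- The tangent-space projection P_T in the structured (cluster) setting. -/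
def projTc {n r rb : ℕ} (U V : Matrix (Fin n) (Fin r) ℝ)
    (Ub Vb : Matrix (Fin n) (Fin rb) ℝ) (Z : Matrix (Fin n) (Fin n) ℝ) :
    Matrix (Fin n) (Fin n) ℝ :=
  U * Uᵀ * Z * Vb * Vbᵀ + Ub * Ubᵀ * Z * V * Vᵀ - U * Uᵀ * Z * V * Vᵀ

/-- The projection P_{T⊥} in the structured (cluster) setting. -/
def projTperpC {n r rb : ℕ} (U V : Matrix (Fin n) (Fin r) ℝ)
    (Ub Vb : Matrix (Fin n) (Fin rb) ℝ) (Z : Matrix (Fin n) (Fin n) ℝ) :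
    Matrix (Fin n) (Fin n) ℝ :=
  (Ub * Ubᵀ - U * Uᵀ) * Z * (Vb * Vbᵀ - V * Vᵀ)

/-!
Every entry of `(P_T R_Ω - P_T) Z` is a weighted sum `∑ w_ab (δ_ab / p - 1)` of independent,
centred, bounded variables, so Hoeffding's inequality controls it. Since `col U ⊆ col Ū`, the
matrix `P_Ū - P_U` is again an orthogonal projection and
`P_T Z = P_U Z P_V̄ + (P_Ū - P_U) Z P_V`; by incoherence the squared weights of either term sum
to at most `(μ0 r / n) (μ̄0 r̄ / n) ‖Z‖_∞²`. For the threshold `‖Z‖_∞ / (4 √(μ0 r))` per term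
the Hoeffding exponent is `p² n² / (8 μ0² r² μ̄0 r̄) ≥ 8 μ̄0 r̄ log² n ≥ 8 log n`, using
`μ̄0 r̄ ≥ r̄ ≥ 1` (the trace of `Ū Ūᵀ` is `r̄`). A union bound over the `n²` entries then bounds every entry by
`‖Z‖_∞ / (2 √(μ0 r))`, hence every row and column norm by `½ √(n / (μ0 r)) ‖Z‖_∞`, outside an
event of probability `4 n² n⁻⁸ ≤ 16 n⁻⁴`.
-/

open ProbabilityTheory Real

def bernDev (p : ℝ) (b : Bool) : ℝ := (if b then p⁻¹ else 0) - 1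

lemma isProbabilityMeasure_bern {p : ℝ} (hp0 : 0 ≤ p) (hp1 : p ≤ 1) :
    IsProbabilityMeasure (bern p) :=
  ⟨by simp [bern, ← ENNReal.ofReal_add hp0 (sub_nonneg.2 hp1)]⟩

lemma isProbabilityMeasure_sampleMeasure (n : ℕ) {p : ℝ} (hp0 : 0 ≤ p) (hp1 : p ≤ 1) :
    IsProbabilityMeasure (sampleMeasure n p) := by
  have := isProbabilityMeasure_bern hp0 hp1
  unfold sampleMeasure
  infer_instance

lemma integral_bernDev {p : ℝ} (hp0 : 0 < p) (hp1 : p ≤ 1) :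
    ∫ b, bernDev p b ∂bern p = 0 := by
  have := isProbabilityMeasure_bern hp0.le hp1
  rw [integral_fintype Integrable.of_finite]
  simp [bern, bernDev, Measure.real, hp0.le, sub_nonneg.2 hp1]
  field_simp
  ring

lemma hasSubgaussianMGF_bernDev {p : ℝ} (hp0 : 0 < p) (hp1 : p ≤ 1) :
    HasSubgaussianMGF (bernDev p) ((‖p⁻¹‖₊ / 2) ^ 2) (bern p) := by
  have := isProbabilityMeasure_bern hp0.le hp1
  have h := hasSubgaussianMGF_of_mem_Icc_of_integral_eq_zero (a := -1) (b := p⁻¹ - 1)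
    (X := bernDev p) (μ := bern p) (Measurable.of_discrete).aemeasurable
    (ae_of_all _ fun b => by cases b <;> simp [bernDev, hp0.le]) (integral_bernDev hp0 hp1)
  simpa using h

lemma ProbabilityTheory.HasSubgaussianMGF.mono {Ω : Type*} {mΩ : MeasurableSpace Ω}
    {μ : Measure Ω} {X : Ω → ℝ} {c d : NNReal} (h : HasSubgaussianMGF X c μ) (hcd : c ≤ d) :
    HasSubgaussianMGF X d μ :=
  ⟨h.integrable_exp_mul, fun t => (h.mgf_le t).trans (exp_le_exp.2 (by gcongr))⟩

lemma hasSubgaussianMGF_const_mul_bernDev_eval {ι : Type*} [Fintype ι] {p : ℝ} (hp0 : 0 < p)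
    (hp1 : p ≤ 1) (a : ℝ) (i : ι) :
    HasSubgaussianMGF (fun ω : ι → Bool => a * bernDev p (ω i))
      ((a ^ 2).toNNReal * (‖p⁻¹‖₊ / 2) ^ 2) (Measure.pi fun _ => bern p) := by
  have := isProbabilityMeasure_bern hp0.le hp1
  refine .of_map (X := fun b => a * bernDev p b) (measurable_pi_apply i).aemeasurable ?_
  rw [(measurePreserving_eval (fun _ : ι => bern p) i).map_eq,
    Real.toNNReal_of_nonneg (sq_nonneg a)]
  exact (hasSubgaussianMGF_bernDev hp0 hp1).const_mul a

theorem measureReal_sum_bernDev_ge_le {ι : Type*} [Fintype ι] {p : ℝ} (hp0 : 0 < p)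
    (hp1 : p ≤ 1) (w : ι → ℝ) {σ2 s : ℝ} (hw : ∑ i, w i ^ 2 ≤ σ2) (hs : 0 ≤ s) :
    (Measure.pi fun _ : ι => bern p).real {ω | s ≤ ∑ i, w i * bernDev p (ω i)} ≤
      exp (-2 * p ^ 2 * s ^ 2 / σ2) := by
  have := isProbabilityMeasure_bern hp0.le hp1
  have hσ2 : 0 ≤ σ2 := (Finset.sum_nonneg fun i _ => sq_nonneg (w i)).trans hw
  have hsum := HasSubgaussianMGF.sum_of_iIndepFun (s := Finset.univ)
    (iIndepFun_pi (μ := fun _ => bern p) (X := fun i b => w i * bernDev p b)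
      fun i => Measurable.of_discrete.aemeasurable)
    fun i _ => hasSubgaussianMGF_const_mul_bernDev_eval hp0 hp1 (w i) i
  have hmono := hsum.mono (d := σ2.toNNReal * (‖p⁻¹‖₊ / 2) ^ 2) <| by
    rw [← Finset.sum_mul]
    gcongr
    rw [← NNReal.coe_le_coe]
    push_cast
    simpa [Real.coe_toNNReal _ hσ2, max_eq_left (sq_nonneg _)] using hw
  refine (hmono.measure_ge_le hs).trans_eq ?_
  congr 1
  push_cast
  rw [Real.coe_toNNReal _ hσ2, Real.norm_eq_abs, abs_inv, abs_of_pos hp0]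
  field_simp

theorem measureReal_abs_sum_bernDev_ge_le {ι : Type*} [Fintype ι] {p : ℝ} (hp0 : 0 < p)
    (hp1 : p ≤ 1) (w : ι → ℝ) {σ2 s : ℝ} (hw : ∑ i, w i ^ 2 ≤ σ2) (hs : 0 ≤ s) :
    (Measure.pi fun _ : ι => bern p).real {ω | s ≤ |∑ i, w i * bernDev p (ω i)|} ≤
      2 * exp (-2 * p ^ 2 * s ^ 2 / σ2) := by
  have := isProbabilityMeasure_bern hp0.le hp1
  have hsplit : {ω : ι → Bool | s ≤ |∑ i, w i * bernDev p (ω i)|} ⊆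
      {ω | s ≤ ∑ i, w i * bernDev p (ω i)} ∪ {ω | s ≤ ∑ i, -w i * bernDev p (ω i)} := by
    intro ω hω
    simp only [neg_mul, Finset.sum_neg_distrib, Set.mem_union, Set.mem_ofPred_eq] at hω ⊢
    rcases le_abs'.1 hω with h | h
    · exact .inr (by linarith)
    · exact .inl h
  have hw' : ∑ i, (-w i) ^ 2 ≤ σ2 := by simpa only [neg_sq] using hw
  calc _ ≤ _ := measureReal_mono hsplit
    _ ≤ _ := measureReal_union_le _ _
    _ ≤ _ := add_le_add (measureReal_sum_bernDev_ge_le hp0 hp1 w hw hs)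
      (measureReal_sum_bernDev_ge_le hp0 hp1 (fun i => -w i) hw' hs)
    _ = _ := (two_mul _).symm

def samplingError {n : ℕ} (p : ℝ) (ω : Fin n × Fin n → Bool) (Z : Matrix (Fin n) (Fin n) ℝ) :
    Matrix (Fin n) (Fin n) ℝ :=
  p⁻¹ • projB ω Z - Z

lemma samplingError_apply {n : ℕ} (p : ℝ) (ω : Fin n × Fin n → Bool)
    (Z : Matrix (Fin n) (Fin n) ℝ) (a b : Fin n) :
    samplingError p ω Z a b = Z a b * bernDev p (ω (a, b)) := by
  by_cases h : ω (a, b)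
  · simp [samplingError, projB, bernDev, h]
    ring
  · simp [samplingError, projB, bernDev, h]

lemma mul_samplingError_mul_apply {n : ℕ} (p : ℝ) (ω : Fin n × Fin n → Bool)
    (Z P Q : Matrix (Fin n) (Fin n) ℝ) (i j : Fin n) :
    (P * samplingError p ω Z * Q) i j =
      ∑ ab : Fin n × Fin n, P i ab.1 * Q ab.2 j * Z ab.1 ab.2 * bernDev p (ω ab) := by
  simp only [Matrix.mul_apply, Finset.sum_mul, samplingError_apply, Fintype.sum_prod_type]
  rw [Finset.sum_comm]
  refine Finset.sum_congr rfl fun b _ => Finset.sum_congr rfl fun a _ => ?_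
  ring

lemma sum_sq_mul_sandwich_le {n : ℕ} {Z P Q : Matrix (Fin n) (Fin n) ℝ} {L : ℝ}
    (hZ : ∀ a b, |Z a b| ≤ L) {i j : Fin n} {α β : ℝ} (hP : ∑ a, P i a ^ 2 ≤ α)
    (hQ : ∑ b, Q b j ^ 2 ≤ β) :
    ∑ ab : Fin n × Fin n, (P i ab.1 * Q ab.2 j * Z ab.1 ab.2) ^ 2 ≤ α * β * L ^ 2 := by
  have hZ2 : ∀ a b, Z a b ^ 2 ≤ L ^ 2 := fun a b =>
    (sq_abs _).symm.trans_le (pow_le_pow_left₀ (abs_nonneg _) (hZ a b) 2)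
  calc ∑ ab : Fin n × Fin n, (P i ab.1 * Q ab.2 j * Z ab.1 ab.2) ^ 2
      ≤ ∑ ab : Fin n × Fin n, P i ab.1 ^ 2 * Q ab.2 j ^ 2 * L ^ 2 :=
        Finset.sum_le_sum fun ab _ => by
          rw [mul_pow, mul_pow]; exact mul_le_mul_of_nonneg_left (hZ2 _ _) (by positivity)
    _ = (∑ a, P i a ^ 2) * (∑ b, Q b j ^ 2) * L ^ 2 := by
        rw [Fintype.sum_prod_type, Finset.sum_mul_sum, Finset.sum_mul]
        simp only [Finset.sum_mul]
    _ ≤ α * β * L ^ 2 := by gcongr; exact (Finset.sum_nonneg fun a _ => sq_nonneg _).trans hP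

theorem measureReal_abs_mul_samplingError_mul_ge_le {n : ℕ} {p : ℝ} (hp0 : 0 < p)
    (hp1 : p ≤ 1) {Z P Q : Matrix (Fin n) (Fin n) ℝ} {L : ℝ} (hZ : ∀ a b, |Z a b| ≤ L)
    {i j : Fin n} {α β s : ℝ} (hP : ∑ a, P i a ^ 2 ≤ α) (hQ : ∑ b, Q b j ^ 2 ≤ β)
    (hs : 0 ≤ s) :
    (sampleMeasure n p).real {ω | s ≤ |(P * samplingError p ω Z * Q) i j|} ≤
      2 * exp (-2 * p ^ 2 * s ^ 2 / (α * β * L ^ 2)) := by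
  simp_rw [mul_samplingError_mul_apply]
  exact measureReal_abs_sum_bernDev_ge_le hp0 hp1 _ (sum_sq_mul_sandwich_le hZ hP hQ) hs

section Projections

variable {n r rb : ℕ}

lemma sum_sq_apply_eq_diag {Q : Matrix (Fin n) (Fin n) ℝ} (hsymm : Qᵀ = Q)
    (hidem : IsIdempotentElem Q) (i : Fin n) : ∑ a, Q i a ^ 2 = Q i i := by
  conv_rhs => rw [← hidem.eq, Matrix.mul_apply]
  refine Finset.sum_congr rfl fun a _ => ?_
  rw [sq, ← Matrix.transpose_apply Q a i, hsymm]

lemma transpose_mul_transpose_self (U : Matrix (Fin n) (Fin r) ℝ) : (U * Uᵀ)ᵀ = U * Uᵀ := by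
  rw [Matrix.transpose_mul, Matrix.transpose_transpose]

lemma isIdempotentElem_mul_transpose {U : Matrix (Fin n) (Fin r) ℝ} (hU : Uᵀ * U = 1) :
    IsIdempotentElem (U * Uᵀ) := by
  rw [IsIdempotentElem, Matrix.mul_assoc, ← Matrix.mul_assoc Uᵀ, hU, Matrix.one_mul]

lemma mul_transpose_apply_self (U : Matrix (Fin n) (Fin r) ℝ) (i : Fin n) :
    (U * Uᵀ) i i = rowNorm U i ^ 2 := by
  rw [rowNorm, Real.sq_sqrt (Finset.sum_nonneg fun k _ => sq_nonneg _), Matrix.mul_apply]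
  simp only [Matrix.transpose_apply, sq]

lemma sum_sq_mul_transpose_apply_left {U : Matrix (Fin n) (Fin r) ℝ} (hU : Uᵀ * U = 1)
    (i : Fin n) : ∑ a, (U * Uᵀ) i a ^ 2 = rowNorm U i ^ 2 := by
  rw [sum_sq_apply_eq_diag (transpose_mul_transpose_self U) (isIdempotentElem_mul_transpose hU),
    mul_transpose_apply_self]

lemma sum_sq_mul_transpose_apply_right {U : Matrix (Fin n) (Fin r) ℝ} (hU : Uᵀ * U = 1)
    (j : Fin n) : ∑ b, (U * Uᵀ) b j ^ 2 = rowNorm U j ^ 2 := by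
  rw [← sum_sq_mul_transpose_apply_left hU j]
  refine Finset.sum_congr rfl fun b _ => ?_
  rw [← Matrix.transpose_apply (U * Uᵀ) j b, transpose_mul_transpose_self]

lemma sum_sq_sub_mul_transpose_apply_le {U : Matrix (Fin n) (Fin r) ℝ}
    {Ub : Matrix (Fin n) (Fin rb) ℝ} (hU : Uᵀ * U = 1) (hUb : Ubᵀ * Ub = 1)
    {C : Matrix (Fin rb) (Fin r) ℝ} (hC : U = Ub * C) (i : Fin n) :
    ∑ a, (Ub * Ubᵀ - U * Uᵀ) i a ^ 2 ≤ rowNorm Ub i ^ 2 := by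
  have hfix : Ub * Ubᵀ * U = U := by
    rw [hC, Matrix.mul_assoc, ← Matrix.mul_assoc Ubᵀ, hUb, Matrix.one_mul]
  have hleft : Ub * Ubᵀ * (U * Uᵀ) = U * Uᵀ := by rw [← Matrix.mul_assoc, hfix]
  have hright : U * Uᵀ * (Ub * Ubᵀ) = U * Uᵀ := by
    rw [← transpose_mul_transpose_self U, ← transpose_mul_transpose_self Ub,
      ← Matrix.transpose_mul, hleft]
  have hsymm : (Ub * Ubᵀ - U * Uᵀ)ᵀ = Ub * Ubᵀ - U * Uᵀ := by
    rw [Matrix.transpose_sub, transpose_mul_transpose_self, transpose_mul_transpose_self]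
  rw [sum_sq_apply_eq_diag hsymm ((isIdempotentElem_mul_transpose hU).sub
      (isIdempotentElem_mul_transpose hUb) hright hleft), Matrix.sub_apply,
    mul_transpose_apply_self, mul_transpose_apply_self]
  linarith [sq_nonneg (rowNorm U i)]

lemma projTc_smul_projB_sub_projTc (U V : Matrix (Fin n) (Fin r) ℝ)
    (Ub Vb : Matrix (Fin n) (Fin rb) ℝ) (p : ℝ) (ω : Fin n × Fin n → Bool)
    (Z : Matrix (Fin n) (Fin n) ℝ) :
    projTc U V Ub Vb (p⁻¹ • projB ω Z) - projTc U V Ub Vb Z =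
      U * Uᵀ * samplingError p ω Z * (Vb * Vbᵀ) +
        (Ub * Ubᵀ - U * Uᵀ) * samplingError p ω Z * (V * Vᵀ) := by
  simp only [samplingError, projTc, Matrix.sub_mul, Matrix.mul_sub, Matrix.mul_assoc]
  abel

lemma sum_rowNorm_sq {U : Matrix (Fin n) (Fin r) ℝ} (hU : Uᵀ * U = 1) :
    ∑ i, rowNorm U i ^ 2 = r := by
  have h := congrArg Matrix.trace hU
  rw [Matrix.trace_one, Fintype.card_fin, Matrix.trace_mul_comm, Matrix.trace] at h
  simpa only [Matrix.diag_apply, mul_transpose_apply_self, Nat.cast_id] using h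

lemma pos_of_eq_mul {U : Matrix (Fin n) (Fin r) ℝ} {Ub : Matrix (Fin n) (Fin rb) ℝ}
    (hU : Uᵀ * U = 1) (hr : 0 < r) {C : Matrix (Fin rb) (Fin r) ℝ} (hC : U = Ub * C) :
    0 < rb := by
  refine Nat.pos_of_ne_zero fun hrb => ?_
  subst hrb
  rw [hC] at hU
  simpa using congrFun (congrFun hU ⟨0, hr⟩) ⟨0, hr⟩

end Projections

section Incoherence

variable {n r : ℕ} {U : Matrix (Fin n) (Fin r) ℝ} {c : ℝ}

lemma pos_of_forall_rowNorm_le_sqrt (hU : Uᵀ * U = 1) (hr : 0 < r)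
    (h : ∀ i, rowNorm U i ≤ √c) : 0 < c := by
  by_contra! hc
  have hzero : ∀ i, rowNorm U i = 0 := fun i =>
    le_antisymm ((h i).trans_eq (Real.sqrt_eq_zero'.2 hc)) (Real.sqrt_nonneg _)
  have := sum_rowNorm_sq hU
  simp [hzero, eq_comm, hr.ne'] at this

lemma rowNorm_sq_le_of_le_sqrt (hc : 0 ≤ c) {i : Fin n} (h : rowNorm U i ≤ √c) :
    rowNorm U i ^ 2 ≤ c :=
  (Real.le_sqrt (Real.sqrt_nonneg _) hc).1 h

lemma natCast_le_mul_of_forall_rowNorm_le_sqrt (hU : Uᵀ * U = 1) (hc : 0 ≤ c)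
    (h : ∀ i, rowNorm U i ≤ √c) : (r : ℝ) ≤ n * c := by
  rw [← sum_rowNorm_sq hU]
  calc ∑ i, rowNorm U i ^ 2 ≤ ∑ _i : Fin n, c :=
        Finset.sum_le_sum fun i _ => rowNorm_sq_le_of_le_sqrt hc (h i)
    _ = n * c := by simp

lemma one_le_mul_of_forall_rowNorm_le_sqrt {μ : ℝ} (hU : Uᵀ * U = 1) (hr : 0 < r)
    (h : ∀ i, rowNorm U i ≤ √(μ * r / n)) : 1 ≤ μ * r := by
  have hc := pos_of_forall_rowNorm_le_sqrt hU hr h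
  have hn : (n : ℝ) ≠ 0 := fun hn => by simp [hn] at hc
  have := natCast_le_mul_of_forall_rowNorm_le_sqrt hU hc.le h
  rw [mul_div_cancel₀ _ hn] at this
  exact (Nat.one_le_cast.2 hr).trans this

end Incoherence

section Norms

variable {n : ℕ}

lemma abs_apply_le_linf {m k : ℕ} (X : Matrix (Fin m) (Fin k) ℝ) (i : Fin m) (j : Fin k) :
    |X i j| ≤ linf X :=
  (le_ciSup (Set.finite_range _).bddAbove j).trans
    (le_ciSup (f := fun i => ⨆ j, |X i j|) (Set.finite_range _).bddAbove i)

lemma linf_nonneg {m k : ℕ} (X : Matrix (Fin m) (Fin k) ℝ) : 0 ≤ linf X :=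
  Real.iSup_nonneg fun _ => Real.iSup_nonneg fun _ => abs_nonneg _

lemma linf2_nonneg (X : Matrix (Fin n) (Fin n) ℝ) : 0 ≤ linf2 X :=
  (Real.iSup_nonneg fun _ => Real.sqrt_nonneg _).trans (le_max_left _ _)

lemma linf2_le_of_forall_abs_le {X : Matrix (Fin n) (Fin n) ℝ} {t : ℝ} (ht : 0 ≤ t)
    (h : ∀ i j, |X i j| ≤ t) : linf2 X ≤ √n * t := by
  have hline : ∀ f : Fin n → ℝ, (∀ k, |f k| ≤ t) → √(∑ k, f k ^ 2) ≤ √n * t := fun f hf => by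
    calc √(∑ k, f k ^ 2) ≤ √(∑ _k : Fin n, t ^ 2) :=
          Real.sqrt_le_sqrt (Finset.sum_le_sum fun k _ => sq_le_sq' (abs_le.1 (hf k)).1
            (abs_le.1 (hf k)).2)
      _ = √n * t := by simp [Real.sqrt_mul, Real.sqrt_sq ht]
  exact max_le (Real.iSup_le (fun i => hline _ (h i)) (by positivity))
    (Real.iSup_le (fun j => hline _ (h · j)) (by positivity))

lemma linf2_zero : linf2 (0 : Matrix (Fin n) (Fin n) ℝ) = 0 :=
  le_antisymm (by simpa using linf2_le_of_forall_abs_le le_rfl (X := 0) (by simp))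
    (linf2_nonneg _)

end Norms

lemma ofReal_one_sub_le_of_measureReal_compl_le {Ω : Type*} {mΩ : MeasurableSpace Ω}
    {μ : Measure Ω} [IsProbabilityMeasure μ] {s : Set Ω} {δ : ℝ} (h : μ.real sᶜ ≤ δ) :
    ENNReal.ofReal (1 - δ) ≤ μ s := by
  have hcover : 1 ≤ μ.real s + μ.real sᶜ := by
    simpa [Set.union_compl_self] using measureReal_union_le (μ := μ) s sᶜ
  rw [← ofReal_measureReal]
  exact ENNReal.ofReal_le_ofReal (by linarith)

theorem measureReal_compl_linf2_le_sqrt_mul_le {n r rb : ℕ} {p : ℝ} (hp0 : 0 < p) (hp1 : p ≤ 1)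
    {U V : Matrix (Fin n) (Fin r) ℝ} {Ub Vb : Matrix (Fin n) (Fin rb) ℝ}
    (hU : Uᵀ * U = 1) (hV : Vᵀ * V = 1) (hUb : Ubᵀ * Ub = 1) (hVb : Vbᵀ * Vb = 1)
    {C : Matrix (Fin rb) (Fin r) ℝ} (hC : U = Ub * C) {Z : Matrix (Fin n) (Fin n) ℝ}
    {L A B t : ℝ} (hZ : ∀ a b, |Z a b| ≤ L) (hUA : ∀ i, rowNorm U i ^ 2 ≤ A)
    (hVA : ∀ j, rowNorm V j ^ 2 ≤ A) (hUbB : ∀ i, rowNorm Ub i ^ 2 ≤ B)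
    (hVbB : ∀ j, rowNorm Vb j ^ 2 ≤ B) (ht : 0 ≤ t) :
    (sampleMeasure n p).real
        {ω | linf2 (projTc U V Ub Vb (p⁻¹ • projB ω Z) - projTc U V Ub Vb Z) ≤ √n * t}ᶜ ≤
      n ^ 2 * (4 * exp (-2 * p ^ 2 * (t / 2) ^ 2 / (A * B * L ^ 2))) := by
  have := isProbabilityMeasure_sampleMeasure n hp0.le hp1
  set δ := exp (-2 * p ^ 2 * (t / 2) ^ 2 / (A * B * L ^ 2))
  set T₁ : (Fin n × Fin n → Bool) → Matrix (Fin n) (Fin n) ℝ :=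
    fun ω => U * Uᵀ * samplingError p ω Z * (Vb * Vbᵀ)
  set T₂ : (Fin n × Fin n → Bool) → Matrix (Fin n) (Fin n) ℝ :=
    fun ω => (Ub * Ubᵀ - U * Uᵀ) * samplingError p ω Z * (V * Vᵀ)
  have hcover : {ω | linf2 (projTc U V Ub Vb (p⁻¹ • projB ω Z) - projTc U V Ub Vb Z) ≤
      √n * t}ᶜ ⊆ ⋃ ij : Fin n × Fin n,
        ({ω | t / 2 ≤ |T₁ ω ij.1 ij.2|} ∪ {ω | t / 2 ≤ |T₂ ω ij.1 ij.2|}) := by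
    intro ω hω
    by_contra hsmall
    simp only [Set.mem_iUnion, Set.mem_union, Set.mem_ofPred_eq, Prod.exists, not_exists,
      not_or, not_le] at hsmall
    refine hω (linf2_le_of_forall_abs_le ht fun i j => ?_)
    rw [projTc_smul_projB_sub_projTc, Matrix.add_apply]
    change |T₁ ω i j + T₂ ω i j| ≤ t
    linarith [abs_add_le (T₁ ω i j) (T₂ ω i j), (hsmall i j).1, (hsmall i j).2]
  have hterm : ∀ i j, (sampleMeasure n p).real
      ({ω | t / 2 ≤ |T₁ ω i j|} ∪ {ω | t / 2 ≤ |T₂ ω i j|}) ≤ 4 * δ := fun i j => by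
    have h₁ : (sampleMeasure n p).real {ω | t / 2 ≤ |T₁ ω i j|} ≤ 2 * δ :=
      measureReal_abs_mul_samplingError_mul_ge_le hp0 hp1 hZ
        ((sum_sq_mul_transpose_apply_left hU i).trans_le (hUA i))
        ((sum_sq_mul_transpose_apply_right hVb j).trans_le (hVbB j)) (by positivity)
    have h₂ : (sampleMeasure n p).real {ω | t / 2 ≤ |T₂ ω i j|} ≤ 2 * δ := by
      simpa only [δ, mul_comm B A] using measureReal_abs_mul_samplingError_mul_ge_le hp0 hp1 hZ
        ((sum_sq_sub_mul_transpose_apply_le hU hUb hC i).trans (hUbB i))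
        ((sum_sq_mul_transpose_apply_right hV j).trans_le (hVA j)) (s := t / 2) (by positivity)
    linarith [measureReal_union_le (μ := sampleMeasure n p)
      {ω | t / 2 ≤ |T₁ ω i j|} {ω | t / 2 ≤ |T₂ ω i j|}]
  calc _ ≤ _ := measureReal_mono hcover
    _ ≤ _ := measureReal_iUnion_fintype_le _
    _ ≤ ∑ _ij : Fin n × Fin n, 4 * δ := Finset.sum_le_sum fun ij _ => hterm ij.1 ij.2
    _ = _ := by simp [sq]

lemma sq_mul_four_mul_exp_le {N a b p L : ℝ} (hN : 3 ≤ N) (ha : 0 < a) (hb : 1 ≤ b)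
    (hL : 0 < L) (hp : 8 * a * b * log N / N ≤ p) :
    N ^ 2 * (4 * exp (-2 * p ^ 2 * (L / (2 * √a) / 2) ^ 2 / (a / N * (b / N) * L ^ 2))) ≤
      16 * N ^ (-4 : ℝ) := by
  have hN0 : 0 < N := by linarith
  have hlog : 1 ≤ log N := by
    rw [Real.le_log_iff_exp_le hN0]
    linarith [Real.exp_one_lt_d9]
  have hexponent : -2 * p ^ 2 * (L / (2 * √a) / 2) ^ 2 / (a / N * (b / N) * L ^ 2) =
      -(p ^ 2 * N ^ 2 / (8 * a ^ 2 * b)) := by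
    rw [div_pow, div_pow, mul_pow, Real.sq_sqrt ha.le]
    field_simp
    ring
  have hpN : 8 * a * b * log N ≤ p * N := by rwa [div_le_iff₀ hN0] at hp
  have hE : 8 * log N ≤ p ^ 2 * N ^ 2 / (8 * a ^ 2 * b) := by
    rw [le_div_iff₀ (by positivity)]
    have hsq : (8 * a * b * log N) ^ 2 ≤ (p * N) ^ 2 :=
      pow_le_pow_left₀ (by positivity) hpN 2
    nlinarith [mul_le_mul_of_nonneg_left hb (by positivity : (0 : ℝ) ≤ 64 * a ^ 2 * log N ^ 2)]
  have hexp : exp (-(p ^ 2 * N ^ 2 / (8 * a ^ 2 * b))) ≤ (N ^ 8)⁻¹ := by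
    rw [← Real.exp_log (pow_pos hN0 8), Real.log_pow, ← Real.exp_neg]
    exact Real.exp_le_exp.2 (by push_cast; linarith)
  rw [hexponent, Real.rpow_neg hN0.le]
  norm_num
  calc N ^ 2 * (4 * exp (-(p ^ 2 * N ^ 2 / (8 * a ^ 2 * b)))) ≤ N ^ 2 * (4 * (N ^ 8)⁻¹) := by
        gcongr
    _ ≤ 16 * (N ^ 4)⁻¹ := by
        field_simp
        nlinarith [pow_le_pow_left₀ (by norm_num) hN 6]

lemma projTc_smul_projB_sub_projTc_eq_zero {n r rb : ℕ} {Z : Matrix (Fin n) (Fin n) ℝ}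
    (U V : Matrix (Fin n) (Fin r) ℝ) (Ub Vb : Matrix (Fin n) (Fin rb) ℝ) (p : ℝ)
    (ω : Fin n × Fin n → Bool) (h : Z = 0 ∨ r = 0) :
    projTc U V Ub Vb (p⁻¹ • projB ω Z) - projTc U V Ub Vb Z = 0 := by
  rw [projTc_smul_projB_sub_projTc]
  rcases h with rfl | rfl
  · have : samplingError p ω (0 : Matrix (Fin n) (Fin n) ℝ) = 0 := by
      ext; simp [samplingError, projB]
    simp [this]
  · simp

theorem measureReal_compl_linf2_le_of_incoherent {n r rb : ℕ} {Z : Matrix (Fin n) (Fin n) ℝ}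
    {U V : Matrix (Fin n) (Fin r) ℝ} {Ub Vb : Matrix (Fin n) (Fin rb) ℝ} {μ0 μb0 p : ℝ}
    (hU : Uᵀ * U = 1) (hV : Vᵀ * V = 1) (hUb : Ubᵀ * Ub = 1) (hVb : Vbᵀ * Vb = 1)
    {C : Matrix (Fin rb) (Fin r) ℝ} (hC : U = Ub * C)
    (hIU : ∀ i, rowNorm U i ≤ √(μ0 * r / n)) (hIV : ∀ j, rowNorm V j ≤ √(μ0 * r / n))
    (hIUb : ∀ i, rowNorm Ub i ≤ √(μb0 * rb / n)) (hIVb : ∀ j, rowNorm Vb j ≤ √(μb0 * rb / n))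
    (hp1 : p ≤ 1) (hpc : 8 * μ0 * μb0 * r * rb * log n / n ≤ p)
    (hn : 3 ≤ n) (hr : 0 < r) (hZ : Z ≠ 0) :
    (sampleMeasure n p).real
        {ω | linf2 (projTc U V Ub Vb (p⁻¹ • projB ω Z) - projTc U V Ub Vb Z) ≤
          1 / 2 * √(n / (μ0 * r)) * linf Z + 1 / 2 * linf2 Z}ᶜ ≤
      16 * (n : ℝ) ^ (-4 : ℝ) := by
  have hN : (3 : ℝ) ≤ n := by exact_mod_cast hn
  have ha := one_le_mul_of_forall_rowNorm_le_sqrt hU hr hIU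
  have hb := one_le_mul_of_forall_rowNorm_le_sqrt hUb (pos_of_eq_mul hU hr hC) hIUb
  have hA : 0 ≤ μ0 * r / n := by positivity
  have hB : 0 ≤ μb0 * rb / n := by positivity
  obtain ⟨a, b, hab⟩ : ∃ a b, Z a b ≠ 0 := by
    by_contra! h
    exact hZ (Matrix.ext h)
  have hL : 0 < linf Z := (abs_pos.2 hab).trans_le (abs_apply_le_linf Z a b)
  have hpc' : 8 * (μ0 * r) * (μb0 * rb) * log n / n ≤ p := by convert hpc using 2; ring
  have hp0 : 0 < p := hpc'.trans_lt' <| by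
    have := Real.log_pos (by linarith : (1 : ℝ) < n)
    positivity
  have := isProbabilityMeasure_sampleMeasure n hp0.le hp1
  set t := linf Z / (2 * √(μ0 * r))
  have hsub : {ω | linf2 (projTc U V Ub Vb (p⁻¹ • projB ω Z) - projTc U V Ub Vb Z) ≤ √n * t} ⊆
      {ω | linf2 (projTc U V Ub Vb (p⁻¹ • projB ω Z) - projTc U V Ub Vb Z) ≤
          1 / 2 * √(n / (μ0 * r)) * linf Z + 1 / 2 * linf2 Z} := by
    have ht : √n * t = 1 / 2 * √(n / (μ0 * r)) * linf Z := by
      rw [Real.sqrt_div' _ (by linarith)]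
      ring
    intro ω hω
    simp only [Set.mem_ofPred_eq, ht] at hω ⊢
    linarith [linf2_nonneg Z]
  calc _ ≤ _ := measureReal_mono (Set.compl_subset_compl.2 hsub)
    _ ≤ _ := measureReal_compl_linf2_le_sqrt_mul_le hp0 hp1 hU hV hUb hVb hC (abs_apply_le_linf Z)
        (fun i => rowNorm_sq_le_of_le_sqrt hA (hIU i))
        (fun j => rowNorm_sq_le_of_le_sqrt hA (hIV j))
        (fun i => rowNorm_sq_le_of_le_sqrt hB (hIUb i))
        (fun j => rowNorm_sq_le_of_le_sqrt hB (hIVb j)) (by positivity)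
    _ ≤ _ := sq_mul_four_mul_exp_le hN (by linarith) hb hL hpc'

/-- Lemma 7: ℓ∞,2 bound, structured setting.
For a fixed matrix Z, if p ≥ c0 μ0 μ̄0 r r̄ log n / n, then with probability at
least 1 − c1 n^{−c2},
‖(P_T R_Ω − P_T)Z‖_{∞,2} ≤ (1/2)√(n/(μ0 r))‖Z‖_∞ + (1/2)‖Z‖_{∞,2}. -/
theorem statement11 :
    ∃ c0 c1 c2 : ℝ, 0 < c0 ∧ 0 < c1 ∧ 0 < c2 ∧
      ∀ (n r rb : ℕ) (Z : Matrix (Fin n) (Fin n) ℝ)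
        (U V : Matrix (Fin n) (Fin r) ℝ) (Ub Vb : Matrix (Fin n) (Fin rb) ℝ)
        (μ0 μb0 p : ℝ),
        -- orthonormal columns and column space inclusions
        Uᵀ * U = 1 → Vᵀ * V = 1 → Ubᵀ * Ub = 1 → Vbᵀ * Vb = 1 →
        (∃ C : Matrix (Fin rb) (Fin r) ℝ, U = Ub * C) →
        (∃ C : Matrix (Fin rb) (Fin r) ℝ, V = Vb * C) →
        -- standard incoherence parameters μ0 and μ̄0
        (∀ i, rowNorm U i ≤ Real.sqrt (μ0 * r / n)) →
        (∀ j, rowNorm V j ≤ Real.sqrt (μ0 * r / n)) →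
        (∀ i, rowNorm Ub i ≤ Real.sqrt (μb0 * rb / n)) →
        (∀ j, rowNorm Vb j ≤ Real.sqrt (μb0 * rb / n)) →
        -- Bernoulli(p) sampling with p above the threshold
        0 ≤ p → p ≤ 1 →
        c0 * μ0 * μb0 * r * rb * Real.log n / n ≤ p →
        ENNReal.ofReal (1 - c1 * ((n : ℝ)) ^ (-c2)) ≤
          sampleMeasure n p
            {ω | linf2 (projTc U V Ub Vb (p⁻¹ • projB ω Z) - projTc U V Ub Vb Z) ≤
              1 / 2 * Real.sqrt ((n : ℝ) / (μ0 * r)) * linf Z + 1 / 2 * linf2 Z} := by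
  refine ⟨8, 16, 4, by norm_num, by norm_num, by norm_num, ?_⟩
  intro n r rb Z U V Ub Vb μ0 μb0 p hU hV hUb hVb ⟨C, hC⟩ _ hIU hIV hIUb hIVb hp0 hp1 hpc
  have := isProbabilityMeasure_sampleMeasure n hp0 hp1
  apply ofReal_one_sub_le_of_measureReal_compl_le
  by_cases hdeg : Z = 0 ∨ r = 0
  · have hempty : {ω | linf2 (projTc U V Ub Vb (p⁻¹ • projB ω Z) - projTc U V Ub Vb Z) ≤
        1 / 2 * √(n / (μ0 * r)) * linf Z + 1 / 2 * linf2 Z}ᶜ = ∅ := by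
      refine Set.compl_empty_iff.2 (Set.eq_univ_of_forall fun ω => ?_)
      rw [Set.mem_ofPred_eq, projTc_smul_projB_sub_projTc_eq_zero U V Ub Vb p ω hdeg, linf2_zero]
      exact add_nonneg (mul_nonneg (by positivity) (linf_nonneg Z))
        (mul_nonneg (by norm_num) (linf2_nonneg Z))
    rw [hempty, measureReal_empty]
    positivity
  push Not at hdeg
  by_cases hn : n ≤ 2
  · have hn1 : 1 ≤ n :=
      Nat.one_le_iff_ne_zero.2 fun h => hdeg.1 (by subst h; exact Subsingleton.elim _ _)
    refine measureReal_le_one.trans ?_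
    rw [Real.rpow_neg (Nat.cast_nonneg n), le_mul_inv_iff₀ (by positivity)]
    norm_num
    exact pow_le_pow_left₀ (Nat.cast_nonneg n) (by exact_mod_cast hn : (n : ℝ) ≤ 2) 4 |>.trans
      (by norm_num)
  · exact measureReal_compl_linf2_le_of_incoherent hU hV hUb hVb hC hIU hIV hIUb hIVb hp1 hpc
      (by omega) (Nat.pos_of_ne_zero hdeg.2) hdeg.1

end
end

section
/- Let U, V ∈ R^{n×r} and Ū, V̄ ∈ R^{n×r̄} have orthonormal columns with col(U) ⊆ col(Ū) and col(V) ⊆ col(V̄), where (U,V) satisfy the standard incoherence condition with parameter μ0 and (Ū,V̄) satisfy it with parameter μ̄0 (so that μ0 r/n ≤ μ̄0 r̄/n). Define P_T(Z) := UU^T Z V̄V̄^T + ŪŪ^T Z VV^T − UU^T Z VV^T. Then for all indices i, j, b ∈ [n]: ‖P_T(e_i e_j^T)‖_F² ≤ 2 (μ0 r/n)(μ̄0 r̄/n) and ‖P_T(e_i e_j^T) e_b‖₂² ≤ 2 (μ0 r/n)(μ̄0² r̄²/n). -/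
open MeasureTheory Matrix

noncomputable section

/-!
Write `P = UUᵀ`, `P̄ = ŪŪᵀ`, `Q = VVᵀ`, `Q̄ = V̄V̄ᵀ`. Then `P_T(Z) = P Z Q̄ + (P̄ - P) Z Q`, and
`col(U) ⊆ col(Ū)` makes `P̄ - P` an orthogonal projection with `P (P̄ - P) = 0`. So
`P_T(e_i e_jᵀ) = (P e_i)(Q̄ e_j)ᵀ + ((P̄ - P) e_i)(Q e_j)ᵀ` has orthogonal left factors, and by
Pythagoras its squared Frobenius norm is `P_ii Q̄_jj + (P̄ - P)_ii Q_jj`; the diagonal entries of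
these projections are squared row norms, bounded by incoherence. A single column is handled the
same way, bounding `Q̄_jb² ≤ Q̄_jj Q̄_bb` by Cauchy–Schwarz and using `μ0 r ≤ μ̄0 r̄`.
-/

theorem sum_sq_mul_add_mul_of_sum_mul_eq_zero {ι : Type*} [Fintype ι] {u w : ι → ℝ}
    (h : ∑ x, u x * w x = 0) (c d : ℝ) :
    ∑ x, (u x * c + w x * d) ^ 2 = (∑ x, u x ^ 2) * c ^ 2 + (∑ x, w x ^ 2) * d ^ 2 := by
  calc ∑ x, (u x * c + w x * d) ^ 2
      = (∑ x, u x ^ 2) * c ^ 2 + 2 * c * d * ∑ x, u x * w x + (∑ x, w x ^ 2) * d ^ 2 := by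
        simp only [Finset.sum_mul, Finset.mul_sum, ← Finset.sum_add_distrib]
        exact Finset.sum_congr rfl fun x _ => by ring
    _ = _ := by rw [h]; ring

theorem mul_single_one_mul_apply {l m n o : Type*} [Fintype m] [Fintype n] [DecidableEq m]
    [DecidableEq n] (A : Matrix l m ℝ) (B : Matrix n o ℝ) (i : m) (j : n) (x : l) (y : o) :
    (A * single i j (1 : ℝ) * B) x y = A x i * B j y := by
  simp [Matrix.mul_apply, Matrix.single, ite_and]

section Projection

variable {ι κ : Type*} [Fintype ι] {P Q R : Matrix ι ι ℝ}

theorem transpose_eq_self_of_isStarProjection (hP : IsStarProjection P) : Pᵀ = P := by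
  simpa [Matrix.star_eq_conjTranspose] using hP.isSelfAdjoint.star_eq

theorem sum_apply_mul_apply_of_isStarProjection (hP : IsStarProjection P) (i : ι) :
    ∑ x, P x i * Q x i = (P * Q) i i := by
  conv_rhs => rw [← transpose_eq_self_of_isStarProjection hP]
  rfl

theorem sum_sq_col_of_isStarProjection (hP : IsStarProjection P) (i : ι) :
    ∑ x, P x i ^ 2 = P i i := by
  simp only [sq, sum_apply_mul_apply_of_isStarProjection hP, hP.isIdempotentElem.eq]

theorem sum_sq_row_of_isStarProjection (hP : IsStarProjection P) (j : ι) :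
    ∑ y, P j y ^ 2 = P j j := by
  conv_lhs => rw [← transpose_eq_self_of_isStarProjection hP]
  exact sum_sq_col_of_isStarProjection hP j

theorem apply_self_nonneg_of_isStarProjection (hP : IsStarProjection P) (i : ι) :
    0 ≤ P i i :=
  sum_sq_col_of_isStarProjection hP i ▸ by positivity

theorem sum_sq_mul_single_mul_add_mul_single_mul_apply [DecidableEq ι]
    (hP : IsStarProjection P) (hR : IsStarProjection R) (hPR : P * R = 0) (A B : Matrix ι κ ℝ)
    (i j : ι) (y : κ) :
    ∑ x, (P * single i j (1 : ℝ) * A + R * single i j (1 : ℝ) * B) x y ^ 2 =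
      P i i * A j y ^ 2 + R i i * B j y ^ 2 := by
  have horth : ∑ x, P x i * R x i = 0 := by
    rw [sum_apply_mul_apply_of_isStarProjection hP, hPR, Matrix.zero_apply]
  simp only [Matrix.add_apply, mul_single_one_mul_apply,
    sum_sq_mul_add_mul_of_sum_mul_eq_zero horth, sum_sq_col_of_isStarProjection hP,
    sum_sq_col_of_isStarProjection hR]

theorem sum_sum_sq_mul_single_mul_add_mul_single_mul [DecidableEq ι]
    (hP : IsStarProjection P) (hR : IsStarProjection R) (hPR : P * R = 0) {A B : Matrix ι ι ℝ}
    (hA : IsStarProjection A) (hB : IsStarProjection B) (i j : ι) :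
    ∑ x, ∑ y, (P * single i j (1 : ℝ) * A + R * single i j (1 : ℝ) * B) x y ^ 2 =
      P i i * A j j + R i i * B j j := by
  rw [Finset.sum_comm]
  simp only [sum_sq_mul_single_mul_add_mul_single_mul_apply hP hR hPR, Finset.sum_add_distrib,
    ← Finset.mul_sum, sum_sq_row_of_isStarProjection hA, sum_sq_row_of_isStarProjection hB]

end Projection

section Orthonormal

variable {ι κ κ' : Type*} [Fintype ι] [Fintype κ] [Fintype κ']

theorem isStarProjection_mul_transpose [DecidableEq κ] {W : Matrix ι κ ℝ} (hW : Wᵀ * W = 1) :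
    IsStarProjection (W * Wᵀ) where
  isIdempotentElem := by
    rw [IsIdempotentElem, Matrix.mul_assoc, ← Matrix.mul_assoc Wᵀ, hW, Matrix.one_mul]
  isSelfAdjoint := by
    simp [IsSelfAdjoint, Matrix.star_eq_conjTranspose]

theorem mul_transpose_mul_mul_transpose_of_eq_mul [DecidableEq κ'] {W : Matrix ι κ ℝ}
    {W' : Matrix ι κ' ℝ} (hW' : W'ᵀ * W' = 1) {C : Matrix κ' κ ℝ} (hC : W = W' * C) :
    W * Wᵀ * (W' * W'ᵀ) = W * Wᵀ := by
  rw [hC, Matrix.transpose_mul, Matrix.mul_assoc, Matrix.mul_assoc Cᵀ,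
    ← Matrix.mul_assoc W'ᵀ, hW', Matrix.one_mul]

theorem isStarProjection_sub_mul_transpose_of_eq_mul [DecidableEq κ] [DecidableEq κ']
    {W : Matrix ι κ ℝ} {W' : Matrix ι κ' ℝ} (hW : Wᵀ * W = 1) (hW' : W'ᵀ * W' = 1)
    {C : Matrix κ' κ ℝ} (hC : W = W' * C) : IsStarProjection (W' * W'ᵀ - W * Wᵀ) :=
  (isStarProjection_mul_transpose hW).sub_of_mul_eq_left (isStarProjection_mul_transpose hW')
    (mul_transpose_mul_mul_transpose_of_eq_mul hW' hC)

theorem mul_transpose_mul_sub_eq_zero_of_eq_mul [DecidableEq κ] [DecidableEq κ']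
    {W : Matrix ι κ ℝ} {W' : Matrix ι κ' ℝ} (hW : Wᵀ * W = 1) (hW' : W'ᵀ * W' = 1)
    {C : Matrix κ' κ ℝ} (hC : W = W' * C) : W * Wᵀ * (W' * W'ᵀ - W * Wᵀ) = 0 := by
  rw [Matrix.mul_sub, mul_transpose_mul_mul_transpose_of_eq_mul hW' hC,
    (isStarProjection_mul_transpose hW).isIdempotentElem.eq, sub_self]

omit [Fintype ι] in
theorem sq_mul_transpose_apply_le_of_forall_apply_self_le {W : Matrix ι κ ℝ} {c : ℝ}
    (h : ∀ x, (W * Wᵀ) x x ≤ c) (x y : ι) : (W * Wᵀ) x y ^ 2 ≤ c ^ 2 := by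
  have hnonneg (z : ι) : 0 ≤ (W * Wᵀ) z z := by
    simpa only [Matrix.mul_apply, Matrix.transpose_apply] using
      Finset.sum_nonneg fun k _ => mul_self_nonneg (W z k)
  calc (W * Wᵀ) x y ^ 2 ≤ (W * Wᵀ) x x * (W * Wᵀ) y y := by
        simpa [Matrix.mul_apply, sq] using Finset.sum_mul_sq_le_sq_mul_sq Finset.univ (W x) (W y)
    _ ≤ c ^ 2 := sq c ▸ mul_le_mul (h x) (h y) (hnonneg y) ((hnonneg x).trans (h x))

end Orthonormal

section Incoherence

variable {n m : ℕ}

theorem rowNorm_eq_sqrt (W : Matrix (Fin n) (Fin m) ℝ) (i : Fin n) :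
    rowNorm W i = √((W * Wᵀ) i i) := by
  simp [rowNorm, Matrix.mul_apply, sq]

theorem mul_transpose_apply_self_le {W : Matrix (Fin n) (Fin m) ℝ} {c : ℝ} (hc : 0 ≤ c)
    {i : Fin n} (h : rowNorm W i ≤ √c) : (W * Wᵀ) i i ≤ c := by
  rwa [rowNorm_eq_sqrt, Real.sqrt_le_sqrt_iff hc] at h

/-- Since `√` of a negative number is `0`, the row bounds alone would allow `μ m / n < 0`;
it is `trace (W Wᵀ) = m` that excludes it. -/
theorem incoherence_nonneg {W : Matrix (Fin n) (Fin m) ℝ} (hW : Wᵀ * W = 1) {μ : ℝ}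
    (h : ∀ i, rowNorm W i ≤ √(μ * m / n)) : 0 ≤ μ * m / n := by
  by_contra! hneg
  have hdiag (i : Fin n) : (W * Wᵀ) i i ≤ 0 := by
    have hrow := (h i).trans_eq (Real.sqrt_eq_zero'.2 hneg.le)
    rw [rowNorm_eq_sqrt] at hrow
    exact Real.sqrt_eq_zero'.1 (le_antisymm hrow (Real.sqrt_nonneg _))
  have hm : (m : ℝ) ≤ 0 :=
    calc (m : ℝ) = trace (W * Wᵀ) := by rw [trace_mul_comm, hW, trace_one, Fintype.card_fin]
      _ ≤ 0 := Finset.sum_nonpos fun i _ => hdiag i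
  simp [le_antisymm hm m.cast_nonneg] at hneg

end Incoherence

theorem div_natCast_sq_le (x : ℝ) (n : ℕ) : (x / n) ^ 2 ≤ x ^ 2 / n := by
  rcases n.eq_zero_or_pos with rfl | hn
  · simp
  rw [div_pow]
  exact div_le_div_of_nonneg_left (sq_nonneg x) (by positivity)
    (le_self_pow₀ (by exact_mod_cast hn) two_ne_zero)

theorem frobNorm_sq {m n : ℕ} (X : Matrix (Fin m) (Fin n) ℝ) :
    frobNorm X ^ 2 = ∑ i, ∑ j, X i j ^ 2 :=
  Real.sq_sqrt (by positivity)

theorem projTc_eq {n r rb : ℕ} (U V : Matrix (Fin n) (Fin r) ℝ)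
    (Ub Vb : Matrix (Fin n) (Fin rb) ℝ) (Z : Matrix (Fin n) (Fin n) ℝ) :
    projTc U V Ub Vb Z = U * Uᵀ * Z * (Vb * Vbᵀ) + (Ub * Ubᵀ - U * Uᵀ) * Z * (V * Vᵀ) := by
  simp only [projTc, Matrix.mul_assoc, Matrix.sub_mul]
  abel

theorem statement18_general (n r rb : ℕ) (U V : Matrix (Fin n) (Fin r) ℝ)
    (Ub Vb : Matrix (Fin n) (Fin rb) ℝ) (μ0 μb0 : ℝ)
    (hU : Uᵀ * U = 1) (hV : Vᵀ * V = 1) (hUb : Ubᵀ * Ub = 1) (hVb : Vbᵀ * Vb = 1)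
    (hUcol : ∃ C : Matrix (Fin rb) (Fin r) ℝ, U = Ub * C)
    (hUinc : ∀ i, rowNorm U i ≤ Real.sqrt (μ0 * r / n))
    (hVinc : ∀ j, rowNorm V j ≤ Real.sqrt (μ0 * r / n))
    (hUbinc : ∀ i, rowNorm Ub i ≤ Real.sqrt (μb0 * rb / n))
    (hVbinc : ∀ j, rowNorm Vb j ≤ Real.sqrt (μb0 * rb / n))
    (hle : μ0 * r / n ≤ μb0 * rb / n) :
    (∀ i j, (frobNorm (projTc U V Ub Vb (Matrix.single i j (1 : ℝ)))) ^ 2 ≤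
        2 * (μ0 * r / n) * (μb0 * rb / n)) ∧
    (∀ i j b, (∑ a, (projTc U V Ub Vb (Matrix.single i j (1 : ℝ)) a b) ^ 2) ≤
        2 * (μ0 * r / n) * (μb0 ^ 2 * (rb : ℝ) ^ 2 / n)) := by
  obtain ⟨C, hC⟩ := hUcol
  set α := μ0 * r / n
  set β := μb0 * rb / n
  have hα : 0 ≤ α := incoherence_nonneg hU hUinc
  have hβ : 0 ≤ β := hα.trans hle
  have hP := isStarProjection_mul_transpose hU
  have hQ := isStarProjection_mul_transpose hV
  have hQb := isStarProjection_mul_transpose hVb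
  have hR := isStarProjection_sub_mul_transpose_of_eq_mul hU hUb hC
  have hPR := mul_transpose_mul_sub_eq_zero_of_eq_mul hU hUb hC
  have hPi i : (U * Uᵀ) i i ≤ α := mul_transpose_apply_self_le hα (hUinc i)
  have hRi i : (Ub * Ubᵀ - U * Uᵀ) i i ≤ β := by
    rw [Matrix.sub_apply]
    linarith [mul_transpose_apply_self_le hβ (hUbinc i), apply_self_nonneg_of_isStarProjection hP i]
  have hQj j : (V * Vᵀ) j j ≤ α := mul_transpose_apply_self_le hα (hVinc j)
  have hQbj j : (Vb * Vbᵀ) j j ≤ β := mul_transpose_apply_self_le hβ (hVbinc j)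
  refine ⟨fun i j => ?_, fun i j b => ?_⟩
  · rw [frobNorm_sq, projTc_eq, sum_sum_sq_mul_single_mul_add_mul_single_mul hP hR hPR hQb hQ]
    calc _ ≤ α * β + β * α :=
          add_le_add (mul_le_mul (hPi i) (hQbj j) (apply_self_nonneg_of_isStarProjection hQb j) hα)
            (mul_le_mul (hRi i) (hQj j) (apply_self_nonneg_of_isStarProjection hQ j) hβ)
      _ = 2 * α * β := by ring
  · rw [projTc_eq]
    simp only [sum_sq_mul_single_mul_add_mul_single_mul_apply hP hR hPR]
    have hQbjb := sq_mul_transpose_apply_le_of_forall_apply_self_le hQbj j b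
    have hQjb := sq_mul_transpose_apply_le_of_forall_apply_self_le hQj j b
    calc _ ≤ α * β ^ 2 + β * α ^ 2 :=
          add_le_add (mul_le_mul (hPi i) hQbjb (sq_nonneg _) hα)
            (mul_le_mul (hRi i) hQjb (sq_nonneg _) hβ)
      _ ≤ 2 * α * β ^ 2 := by nlinarith [mul_le_mul_of_nonneg_left hle (mul_nonneg hα hβ)]
      _ ≤ 2 * α * (μb0 ^ 2 * (rb : ℝ) ^ 2 / n) := by
          gcongr
          simpa only [mul_pow] using div_natCast_sq_le (μb0 * rb) n

/-- basic inequalities for P_T in the structured setting: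
‖P_T(e_i e_jᵀ)‖_F² ≤ 2(μ0 r/n)(μ̄0 r̄/n) and
‖P_T(e_i e_jᵀ) e_b‖₂² ≤ 2(μ0 r/n)(μ̄0² r̄²/n). -/
theorem statement18 (n r rb : ℕ) (U V : Matrix (Fin n) (Fin r) ℝ)
    (Ub Vb : Matrix (Fin n) (Fin rb) ℝ) (μ0 μb0 : ℝ)
    (hU : Uᵀ * U = 1) (hV : Vᵀ * V = 1) (hUb : Ubᵀ * Ub = 1) (hVb : Vbᵀ * Vb = 1)
    (hUcol : ∃ C : Matrix (Fin rb) (Fin r) ℝ, U = Ub * C)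
    (hVcol : ∃ C : Matrix (Fin rb) (Fin r) ℝ, V = Vb * C)
    (hUinc : ∀ i, rowNorm U i ≤ Real.sqrt (μ0 * r / n))
    (hVinc : ∀ j, rowNorm V j ≤ Real.sqrt (μ0 * r / n))
    (hUbinc : ∀ i, rowNorm Ub i ≤ Real.sqrt (μb0 * rb / n))
    (hVbinc : ∀ j, rowNorm Vb j ≤ Real.sqrt (μb0 * rb / n))
    (hle : μ0 * r / n ≤ μb0 * rb / n) :
    (∀ i j, (frobNorm (projTc U V Ub Vb (Matrix.single i j (1 : ℝ)))) ^ 2 ≤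
        2 * (μ0 * r / n) * (μb0 * rb / n)) ∧
    (∀ i j b, (∑ a, (projTc U V Ub Vb (Matrix.single i j (1 : ℝ)) a b) ^ 2) ≤
        2 * (μ0 * r / n) * (μb0 ^ 2 * (rb : ℝ) ^ 2 / n)) :=
  statement18_general n r rb U V Ub Vb μ0 μb0 hU hV hUb hVb hUcol hUinc hVinc hUbinc hVbinc hle

end
end
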